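/- At every minimizer (t*, p*, y*) of the joint routing problem, for every energy link q with start node n and end node m, and for all data links l outgoing from n and k outgoing from m with p*_l > 0, t*_l > 0, p*_k > 0 and t*_k > 0, one has g_l(p*_l) ≥ α_q · g_k(p*_k), with equality whenever y*_q > 0; here g_l(p) = (t*_l/(2σ_l)) · ((1/2)·ln(1 + p/σ_l) − t*_l)^{−2} · (1 + p/σ_l)^{−1}. -/

import Mathlib

open BigOperators ENNReal

/-- The joint routing problem: nodes `N`, data links `L` (start node, end node, noise
power `σ l > 0`), energy links `Q` (start node, end node, efficiency `α q ∈ (0,1]`),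
harvested energies `E n ≥ 0`, designated destination nodes `dest`, and exogenous
arrivals `s n ≥ 0` at non-destination nodes. -/
structure JNet where
  N : Type
  L : Type
  Q : Type
  [fintypeN : Fintype N]
  [fintypeL : Fintype L]
  [fintypeQ : Fintype Q]
  [decEqN : DecidableEq N]
  startD : L → N
  endD : L → N
  startE : Q → N
  endE : Q → N
  α : Q → ℝ
  σ : L → ℝ
  E : N → ℝ
  dest : N → Prop
  [decDest : DecidablePred dest]
  s : N → ℝ
  hα : ∀ q, 0 < α q ∧ α q ≤ 1
  hσ : ∀ l, 0 < σ l
  hE : ∀ n, 0 ≤ E n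
  hs : ∀ n, ¬ dest n → 0 ≤ s n

attribute [instance] JNet.fintypeN JNet.fintypeL JNet.fintypeQ JNet.decEqN JNet.decDest

/-- A triple `(t, p, y)` is feasible: nonnegative flows, capacity constraints
`p_l ≥ σ_l (e^{2 t_l} − 1)`, nonnegative energy transfers, the energy constraint at
every node, and flow conservation at every non-destination node. -/
def JNet.Feasible (net : JNet) (t p : net.L → ℝ) (y : net.Q → ℝ) : Prop :=
  (∀ l, 0 ≤ t l) ∧
  (∀ l, net.σ l * (Real.exp (2 * t l) - 1) ≤ p l) ∧
  (∀ q, 0 ≤ y q) ∧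
  (∀ n : net.N,
    (∑ l ∈ Finset.univ.filter (fun l => net.startD l = n), p l) +
      (∑ q ∈ Finset.univ.filter (fun q => net.startE q = n), y q) ≤
    net.E n + ∑ q ∈ Finset.univ.filter (fun q => net.endE q = n), net.α q * y q) ∧
  (∀ n : net.N, ¬ net.dest n →
    (∑ l ∈ Finset.univ.filter (fun l => net.startD l = n), t l) -
      (∑ l ∈ Finset.univ.filter (fun l => net.endD l = n), t l) = net.s n)

/-- The delay `h(p, t) = t / ((1/2)·ln(1 + p/σ) − t)` on a single link, taken to
be `0` when `t = 0` and `+∞` when `t > 0` and `(1/2)·ln(1 + p/σ) ≤ t`. -/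
noncomputable def linkDelay (σ p t : ℝ) : ℝ≥0∞ :=
  if t = 0 then 0
  else if t < (1 / 2) * Real.log (1 + p / σ) then
    ENNReal.ofReal (t / ((1 / 2) * Real.log (1 + p / σ) - t))
  else ⊤

/-- The network delay `D(t, p) = ∑_l h_l(p_l, t_l)`. -/
noncomputable def JNet.Delay (net : JNet) (t p : net.L → ℝ) : ℝ≥0∞ :=
  ∑ l, linkDelay (net.σ l) (p l) (t l)

/-- A minimizer of the joint routing problem: a feasible triple with finite delay
minimizing the delay over all feasible triples. -/
def JNet.IsMinimizer (net : JNet) (t p : net.L → ℝ) (y : net.Q → ℝ) : Prop :=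
  net.Feasible t p y ∧ net.Delay t p < ⊤ ∧
    ∀ t' p' y', net.Feasible t' p' y' → net.Delay t p ≤ net.Delay t' p'

/-- The marginal quantity
`g(p) = (t/(2σ)) · ((1/2)·ln(1 + p/σ) − t)^{−2} · (1 + p/σ)^{−1}`, with the
convention that it is `0` when `t = 0`. -/
noncomputable def gMargJ (t σ p : ℝ) : ℝ :=
  if t = 0 then 0
  else t / (2 * σ) / ((1 / 2) * Real.log (1 + p / σ) - t) ^ 2 / (1 + p / σ)

/-- A data path from node `a` to a destination: a nonempty finite sequence of data
links starting at `a`, consecutively matched, and ending at a destination node. -/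
def JNet.IsDataPath (net : JNet) (a : net.N) (P : List net.L) : Prop :=
  ∃ hne : P ≠ [],
    net.startD (P.head hne) = a ∧
    net.dest (net.endD (P.getLast hne)) ∧
    P.Chain' (fun l₁ l₂ => net.endD l₁ = net.startD l₂)

/-!
Move `ε` units of energy along `q`: node `n` spends `ε` less on link `l` and sends `ε` more
over `q`, and node `m` spends the `α_q ε` it receives on link `k`, i.e. the powers move in the
direction `α_q e_k − e_l`. Every energy constraint
stays balanced, and since a finite delay forces strict slack in the capacity constraint of every
busy link, the perturbed triple stays feasible for all small `ε ≥ 0` (and all small `ε` when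
`y*_q > 0`). Along this curve the delay is differentiable with derivative `g_l − α_q g_k` at
`ε = 0`, so minimality makes it nonnegative, and zero when both signs of `ε` are allowed.
-/

open Filter Topology Set

noncomputable def linkDelayReal (σ p t : ℝ) : ℝ :=
  t / ((1 / 2) * Real.log (1 + p / σ) - t)

theorem lt_half_log_iff {σ p t : ℝ} (hσ : 0 < σ) (hp : 0 < 1 + p / σ) :
    t < 1 / 2 * Real.log (1 + p / σ) ↔ σ * (Real.exp (2 * t) - 1) < p := by
  calc t < 1 / 2 * Real.log (1 + p / σ) ↔ 2 * t < Real.log (1 + p / σ) := by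
        constructor <;> intro h <;> linarith
    _ ↔ Real.exp (2 * t) < 1 + p / σ := Real.lt_log_iff_exp_lt hp
    _ ↔ Real.exp (2 * t) - 1 < p / σ := by constructor <;> intro h <;> linarith
    _ ↔ σ * (Real.exp (2 * t) - 1) < p := lt_div_iff₀' hσ

theorem one_add_div_pos_of_le {σ p t : ℝ} (hσ : 0 < σ)
    (h : σ * (Real.exp (2 * t) - 1) ≤ p) : 0 < 1 + p / σ := by
  have : Real.exp (2 * t) - 1 ≤ p / σ := (le_div_iff₀' hσ).2 h
  linarith [Real.exp_pos (2 * t)]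

theorem lt_half_log_of_lt {σ p t : ℝ} (hσ : 0 < σ) (h : σ * (Real.exp (2 * t) - 1) < p) :
    t < 1 / 2 * Real.log (1 + p / σ) :=
  (lt_half_log_iff hσ (one_add_div_pos_of_le hσ h.le)).2 h

theorem linkDelayReal_nonneg {σ p t : ℝ} (hσ : 0 < σ) (ht : 0 ≤ t)
    (h : t = 0 ∨ σ * (Real.exp (2 * t) - 1) < p) : 0 ≤ linkDelayReal σ p t := by
  rcases ht.eq_or_lt with rfl | ht
  · simp [linkDelayReal]
  · have := lt_half_log_of_lt hσ (h.resolve_left ht.ne')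
    exact div_nonneg ht.le (by linarith)

theorem linkDelay_eq_ofReal {σ p t : ℝ} (hσ : 0 < σ) (ht : 0 ≤ t)
    (h : t = 0 ∨ σ * (Real.exp (2 * t) - 1) < p) :
    linkDelay σ p t = ENNReal.ofReal (linkDelayReal σ p t) := by
  rcases ht.eq_or_lt with rfl | ht
  · simp [linkDelay, linkDelayReal]
  · rw [linkDelay, if_neg ht.ne', if_pos (lt_half_log_of_lt hσ (h.resolve_left ht.ne')),
      linkDelayReal]

theorem lt_half_log_of_linkDelay_ne_top {σ p t : ℝ} (ht : t ≠ 0) (h : linkDelay σ p t ≠ ⊤) :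
    t < 1 / 2 * Real.log (1 + p / σ) := by
  by_contra hge
  exact h (by rw [linkDelay, if_neg ht, if_neg hge])

theorem hasDerivAt_linkDelayReal {σ p t : ℝ} (ht : t ≠ 0) (hp : 1 + p / σ ≠ 0)
    (hc : 1 / 2 * Real.log (1 + p / σ) - t ≠ 0) :
    HasDerivAt (fun x => linkDelayReal σ x t) (-gMargJ t σ p) p := by
  have hlog : HasDerivAt (fun x => 1 / 2 * Real.log (1 + x / σ) - t)
      (1 / 2 * ((1 + p / σ)⁻¹ * (1 / σ))) p := by
    have hin : HasDerivAt (fun x : ℝ => 1 + x / σ) (1 / σ) p := by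
      simpa using ((hasDerivAt_id p).div_const σ).const_add 1
    exact (((Real.hasDerivAt_log hp).comp p hin).const_mul (1 / 2)).sub_const t
  unfold linkDelayReal
  refine ((hasDerivAt_const p t).div hlog hc).congr_deriv ?_
  rw [gMargJ, if_neg ht]
  ring

theorem HasDerivAt.nonneg_of_isLocalMinOn_Ici {φ : ℝ → ℝ} {a d : ℝ} (hφ : HasDerivAt φ d a)
    (hmin : IsLocalMinOn φ (Ici a) a) : 0 ≤ d := by
  have hcone : (1 : ℝ) ∈ posTangentConeAt (Ici a) a :=
    mem_posTangentConeAt_of_segment_subset (by simp [segment_eq_Icc, Icc_subset_Ici_self])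
  simpa using hmin.hasFDerivWithinAt_nonneg hφ.hasFDerivAt.hasFDerivWithinAt hcone

namespace JNet

open scoped Classical

variable {net : JNet} {t p : net.L → ℝ} {y : net.Q → ℝ}

noncomputable def powerShift (net : JNet) (q : net.Q) (l k : net.L) : net.L → ℝ :=
  Pi.single k (net.α q) - Pi.single l 1

theorem powerShift_of_ne {q : net.Q} {l k j : net.L} (hl : j ≠ l) (hk : j ≠ k) :
    net.powerShift q l k j = 0 := by
  simp [powerShift, hl, hk]

theorem sum_powerShift_mul (q : net.Q) (l k : net.L) (f : net.L → ℝ) :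
    ∑ j, net.powerShift q l k j * f j = net.α q * f k - f l := by
  simp [powerShift, sub_mul, Finset.sum_sub_distrib, Pi.single_apply]

theorem sum_powerShift_startD {q : net.Q} {l k : net.L} (hl : net.startD l = net.startE q)
    (hk : net.startD k = net.endE q) (n : net.N) :
    ∑ j ∈ Finset.univ.filter (fun j => net.startD j = n), net.powerShift q l k j =
      (if net.endE q = n then net.α q else 0) - if net.startE q = n then 1 else 0 := by
  simp [powerShift, Finset.sum_sub_distrib, Finset.sum_pi_single', hl, hk]

theorem Feasible.transfer (hf : net.Feasible t p y)
    {q : net.Q} {l k : net.L} (hl : net.startD l = net.startE q)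
    (hk : net.startD k = net.endE q) {ε : ℝ} (hy : 0 ≤ y q + ε)
    (hcap : ∀ j, net.σ j * (Real.exp (2 * t j) - 1) ≤ p j + ε * net.powerShift q l k j) :
    net.Feasible t (fun j => p j + ε * net.powerShift q l k j)
      (y + Pi.single q ε) := by
  obtain ⟨ht, -, hy0, henergy, hflow⟩ := hf
  refine ⟨ht, hcap, fun r => ?_, fun n => ?_, hflow⟩
  · rcases eq_or_ne r q with rfl | hr
    · simpa using hy
    · simpa [hr] using hy0 r
  · have hweighted : ∀ r, net.α r * (y r + (Pi.single q ε : net.Q → ℝ) r) =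
        net.α r * y r + (Pi.single q (net.α q * ε) : net.Q → ℝ) r := by
      intro r
      rcases eq_or_ne r q with rfl | hr
      · simp [mul_add]
      · simp [hr]
    simp only [Pi.add_apply, Finset.sum_add_distrib, ← Finset.mul_sum, hweighted,
      Finset.sum_pi_single', sum_powerShift_startD hl hk, Finset.mem_filter, Finset.mem_univ,
      true_and]
    have := henergy n
    split_ifs <;> linarith

theorem Delay_eq_ofReal (ht : ∀ j, 0 ≤ t j)
    (h : ∀ j, t j = 0 ∨ net.σ j * (Real.exp (2 * t j) - 1) < p j) :
    net.Delay t p = ENNReal.ofReal (∑ j, linkDelayReal (net.σ j) (p j) (t j)) := by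
  rw [Delay,
    ENNReal.ofReal_sum_of_nonneg fun j _ => linkDelayReal_nonneg (net.hσ j) (ht j) (h j)]
  exact Finset.sum_congr rfl fun j _ => linkDelay_eq_ofReal (net.hσ j) (ht j) (h j)

theorem IsMinimizer.capacity_lt (hmin : net.IsMinimizer t p y)
    {j : net.L} (hj : 0 < t j) : net.σ j * (Real.exp (2 * t j) - 1) < p j := by
  have hfin : linkDelay (net.σ j) (p j) (t j) ≠ ⊤ :=
    (ENNReal.sum_lt_top.1 hmin.2.1 j (Finset.mem_univ j)).ne
  have hpos := one_add_div_pos_of_le (net.hσ j) (hmin.1.2.1 j)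
  exact (lt_half_log_iff (net.hσ j) hpos).1 (lt_half_log_of_linkDelay_ne_top hj.ne' hfin)

noncomputable def transferDelay (net : JNet) (t p : net.L → ℝ) (q : net.Q) (l k : net.L)
    (ε : ℝ) : ℝ :=
  ∑ j, linkDelayReal (net.σ j) (p j + ε * net.powerShift q l k j) (t j)

theorem IsMinimizer.eventually_capacity (hmin : net.IsMinimizer t p y) {q : net.Q}
    {l k : net.L} (htl : 0 < t l) (htk : 0 < t k) : ∀ᶠ ε in 𝓝 (0 : ℝ), ∀ j,
      net.σ j * (Real.exp (2 * t j) - 1) ≤ p j + ε * net.powerShift q l k j ∧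
      (t j = 0 ∨ net.σ j * (Real.exp (2 * t j) - 1) < p j + ε * net.powerShift q l k j) := by
  refine eventually_all.2 fun j => ?_
  rcases (hmin.1.1 j).eq_or_lt with h0 | hpos
  · have hl : j ≠ l := by rintro rfl; linarith
    have hk : j ≠ k := by rintro rfl; linarith
    simpa [powerShift_of_ne hl hk, h0.symm] using hmin.1.2.1 j
  · have hcont : Continuous fun ε : ℝ => p j + ε * net.powerShift q l k j := by fun_prop
    replace hcont := hcont.tendsto' 0 (p j) (by simp)
    filter_upwards [hcont.eventually_const_lt (hmin.capacity_lt hpos)] with ε hε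
    exact ⟨hε.le, Or.inr hε⟩

theorem IsMinimizer.eventually_transferDelay_le (hmin : net.IsMinimizer t p y) {q : net.Q}
    {l k : net.L} (hl : net.startD l = net.startE q) (hk : net.startD k = net.endE q)
    (htl : 0 < t l) (htk : 0 < t k) : ∀ᶠ ε in 𝓝 (0 : ℝ), 0 ≤ y q + ε →
      net.transferDelay t p q l k 0 ≤ net.transferDelay t p q l k ε := by
  filter_upwards [hmin.eventually_capacity htl htk] with ε hε hy
  have hle := hmin.2.2 _ _ _ (hmin.1.transfer hl hk hy fun j => (hε j).1)
  have hslack : ∀ j, t j = 0 ∨ net.σ j * (Real.exp (2 * t j) - 1) < p j := fun j =>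
    (hmin.1.1 j).eq_or_lt.imp Eq.symm hmin.capacity_lt
  rw [Delay_eq_ofReal hmin.1.1 hslack, Delay_eq_ofReal hmin.1.1 fun j => (hε j).2,
    ENNReal.ofReal_le_ofReal_iff (Finset.sum_nonneg fun j _ =>
      linkDelayReal_nonneg (net.hσ j) (hmin.1.1 j) (hε j).2)] at hle
  simpa [transferDelay] using hle

theorem IsMinimizer.hasDerivAt_transferDelay (hmin : net.IsMinimizer t p y) (q : net.Q)
    (l k : net.L) :
    HasDerivAt (net.transferDelay t p q l k)
      (gMargJ (t l) (net.σ l) (p l) - net.α q * gMargJ (t k) (net.σ k) (p k)) 0 := by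
  have hlink : ∀ j, HasDerivAt (fun x => linkDelayReal (net.σ j) x (t j))
      (-gMargJ (t j) (net.σ j) (p j)) (p j) := by
    intro j
    rcases (hmin.1.1 j).eq_or_lt with h0 | hpos
    · simpa [← h0, linkDelayReal, gMargJ] using hasDerivAt_const (p j) (0 : ℝ)
    · have hcap := hmin.capacity_lt hpos
      have := lt_half_log_of_lt (net.hσ j) hcap
      exact hasDerivAt_linkDelayReal hpos.ne' (one_add_div_pos_of_le (net.hσ j) hcap.le).ne'
        (by linarith)
  have hpath : ∀ j, HasDerivAt (fun ε : ℝ => p j + ε * net.powerShift q l k j)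
      (net.powerShift q l k j) 0 := fun j => by
    simpa using ((hasDerivAt_id (0 : ℝ)).mul_const (net.powerShift q l k j)).const_add (p j)
  refine (HasDerivAt.fun_sum (u := Finset.univ) fun j _ =>
    (hlink j).comp_of_eq 0 (hpath j) (by simp)).congr_deriv ?_
  simp_rw [mul_comm (-gMargJ _ _ _), sum_powerShift_mul]
  ring

end JNet

/-- At every minimizer `(t*, p*, y*)` of the joint routing problem, for
every energy link `q` from node `n` to node `m`, and all data links `l` outgoing from
`n` and `k` outgoing from `m` with `p*_l > 0`, `t*_l > 0`, `p*_k > 0`, `t*_k > 0`, one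
has `g_l(p*_l) ≥ α_q · g_k(p*_k)`, with equality whenever `y*_q > 0`. -/
theorem joint_minimizer_energy_transfer_condition (net : JNet)
    (tstar pstar : net.L → ℝ) (ystar : net.Q → ℝ)
    (hmin : net.IsMinimizer tstar pstar ystar) :
    ∀ q : net.Q, ∀ l k : net.L,
      net.startD l = net.startE q → net.startD k = net.endE q →
      0 < pstar l → 0 < tstar l → 0 < pstar k → 0 < tstar k →
      net.α q * gMargJ (tstar k) (net.σ k) (pstar k) ≤
          gMargJ (tstar l) (net.σ l) (pstar l) ∧
        (0 < ystar q →
          gMargJ (tstar l) (net.σ l) (pstar l) =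
            net.α q * gMargJ (tstar k) (net.σ k) (pstar k)) := by
  intro q l k hl hk _ htl _ htk
  have hderiv := hmin.hasDerivAt_transferDelay q l k
  have hloc := hmin.eventually_transferDelay_le hl hk htl htk
  refine ⟨?_, fun hy => ?_⟩
  · have hright : IsLocalMinOn (net.transferDelay tstar pstar q l k) (Ici 0) 0 := by
      filter_upwards [nhdsWithin_le_nhds hloc, self_mem_nhdsWithin] with ε hε (hε0 : 0 ≤ ε)
      exact hε (by linarith [hmin.1.2.2.1 q])
    linarith [hderiv.nonneg_of_isLocalMinOn_Ici hright]
  · have hmin0 : IsLocalMin (net.transferDelay tstar pstar q l k) 0 := by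
      filter_upwards [hloc, eventually_ge_nhds (neg_lt_zero.2 hy)] with ε hε hε0
      exact hε (by linarith)
    linarith [hmin0.hasDerivAt_eq_zero hderiv]
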